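/- arXiv:1808.08570 — 2 statements merged into one kernel-verified Lean document; each statement's English description precedes it below -/
import Mathlib

section
/- In Ω¹_R/dR for R = ℂ[t,t⁻¹,u] with uᵐ = k(t), for all i,j ∈ ℤ and l ∈ {1,...,m-1} with 2l ≤ m-1, one has tⁱuˡ·d(tʲuˡ) ≡ ((j-i)/2)·tⁱ⁺ʲ⁻¹u²ˡ·dt modulo dR. -/
/-!
For any derivation `d`, `x dy + y dx = d(xy)` is exact, so `2 x dy ≡ x dy - y dx`. With
`x = tⁱc`, `y = tʲc` the right side is `c² (tⁱ dtʲ - tʲ dtⁱ)`, and since `t` is a unit,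
`d(tⁿ) = n tⁿ⁻¹ dt` for every `n ∈ ℤ`, giving `(j - i) tⁱ⁺ʲ⁻¹ c² dt`.
-/

noncomputable section

abbrev LA : Type := LaurentPolynomial ℂ

/-- The superelliptic ring `R = ℂ[t,t⁻¹,u]` with `u^m = k(t)`. -/
abbrev SER (m : ℕ) (k : Polynomial ℂ) : Type :=
  AdjoinRoot ((Polynomial.X : Polynomial LA) ^ m - Polynomial.C k.toLaurent)

/-- `t^i ∈ R` for `i : ℤ`. -/
def tpow (m : ℕ) (k : Polynomial ℂ) (i : ℤ) : SER m k :=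
  AdjoinRoot.of _ (LaurentPolynomial.T i)

/-- `u ∈ R`. -/
def uu (m : ℕ) (k : Polynomial ℂ) : SER m k := AdjoinRoot.root _

/-- The universal derivation `d : R → Ω¹_{R/ℂ}`. -/
def Dd (m : ℕ) (k : Polynomial ℂ) :
    Derivation ℂ (SER m k) (KaehlerDifferential ℂ (SER m k)) :=
  KaehlerDifferential.D ℂ (SER m k)

/-- The subspace `dR ⊆ Ω¹_R` of exact differentials. -/
def dR (m : ℕ) (k : Polynomial ℂ) : Submodule ℂ (KaehlerDifferential ℂ (SER m k)) :=
  LinearMap.range (Dd m k).toLinearMap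

/-- The quotient `Ω¹_R / dR`. -/
abbrev OmQ (m : ℕ) (k : Polynomial ℂ) := KaehlerDifferential ℂ (SER m k) ⧸ dR m k

/-- The class of a differential in `Ω¹_R / dR`. -/
def cl (m : ℕ) (k : Polynomial ℂ) (w : KaehlerDifferential ℂ (SER m k)) : OmQ m k :=
  Submodule.Quotient.mk w

/-- The polynomial `k(t) = Σ_{i=0}^d a_i t^i`. -/
def kpoly (d : ℕ) (a : ℕ → ℂ) : Polynomial ℂ :=
  ∑ i ∈ Finset.range (d + 1), Polynomial.C (a i) * Polynomial.X ^ i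

namespace Derivation

variable {R A M : Type*} [CommRing R] [CommRing A] [Algebra R A] [AddCommGroup M] [Module A M]
  [Module R M] (D : Derivation R A M)

theorem leibniz_units_zpow (u : Aˣ) (n : ℤ) :
    D ↑(u ^ n) = n • (↑(u ^ (n - 1)) : A) • D ↑u := by
  have step (n : ℤ) : D ↑(u ^ (n + 1)) = (↑(u ^ n) : A) • D ↑u + (u : A) • D ↑(u ^ n) := by
    rw [zpow_add_one, Units.val_mul, D.leibniz, add_comm]
  have val_mul_zpow (n : ℤ) : (u : A) * ↑(u ^ n) = ↑(u ^ (n + 1)) := by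
    rw [← Units.val_mul, ← zpow_one_add, add_comm]
  induction n using Int.induction_on with
  | zero => simp
  | succ n ih =>
    rw [step, ih, smul_comm, smul_smul, val_mul_zpow, sub_add_cancel, add_sub_cancel_right]
    module
  | pred n ih =>
    have h := step (-n - 1)
    rw [sub_add_cancel, ih] at h
    apply u.isUnit.smul_left_cancel.mp
    rw [smul_comm, smul_smul, val_mul_zpow, sub_add_cancel]
    linear_combination (norm := module) -h

theorem mul_smul_map_mul_sub (a b c : A) :
    (a * c) • D (b * c) - (b * c) • D (a * c) = c ^ 2 • (a • D b - b • D a) := by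
  simp only [leibniz, smul_add, smul_sub, smul_smul]
  module

theorem zpow_smul_map_zpow_sub (u : Aˣ) (i j : ℤ) :
    (↑(u ^ i) : A) • D ↑(u ^ j) - (↑(u ^ j) : A) • D ↑(u ^ i)
      = (j - i) • (↑(u ^ (i + j - 1)) : A) • D ↑u := by
  have hi : (↑(u ^ i) : A) * ↑(u ^ (j - 1)) = ↑(u ^ (i + j - 1)) := by
    rw [← Units.val_mul, ← zpow_add, add_sub_assoc]
  have hj : (↑(u ^ j) : A) * ↑(u ^ (i - 1)) = ↑(u ^ (i + j - 1)) := by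
    rw [← Units.val_mul, ← zpow_add, add_sub_assoc, add_sub_left_comm, ← add_sub_assoc, add_comm]
  rw [leibniz_units_zpow, leibniz_units_zpow, smul_comm _ (j : ℤ), smul_comm _ (i : ℤ), smul_smul,
    smul_smul, hi, hj, sub_smul]

theorem two_smul_mk_smul (x y : A) :
    (2 : R) • (Submodule.Quotient.mk (x • D y) : M ⧸ LinearMap.range D.toLinearMap)
      = Submodule.Quotient.mk (x • D y - y • D x) := by
  rw [← Submodule.Quotient.mk_smul, Submodule.Quotient.eq]
  refine ⟨x * y, ?_⟩
  rw [coeFn_coe, leibniz, two_smul]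
  abel

end Derivation

theorem tpow_add (m : ℕ) (k : Polynomial ℂ) (a b : ℤ) :
    tpow m k (a + b) = tpow m k a * tpow m k b := by
  rw [tpow, tpow, tpow, LaurentPolynomial.T_add, map_mul]

theorem exists_unit_tpow_eq_zpow (m : ℕ) (k : Polynomial ℂ) :
    ∃ t : (SER m k)ˣ, ∀ n, tpow m k n = ↑(t ^ n) := by
  obtain ⟨t, ht⟩ : IsUnit (tpow m k 1) := (LaurentPolynomial.isUnit_T 1).map _
  refine ⟨t, fun n => ?_⟩
  induction n using Int.induction_on with
  | zero => rw [zpow_zero, Units.val_one, tpow, LaurentPolynomial.T_zero, map_one]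
  | succ n ih => rw [zpow_add_one, Units.val_mul, ← ih, ht, tpow_add]
  | pred n ih =>
    apply (Units.mul_left_inj t).mp
    rw [← Units.val_mul, ← zpow_add_one, sub_add_cancel, ← ih, ht, ← tpow_add, sub_add_cancel]

theorem stmt11_general (m : ℕ) (k : Polynomial ℂ) (i j : ℤ) (l : ℕ) :
    cl m k ((tpow m k i * uu m k ^ l) • Dd m k (tpow m k j * uu m k ^ l))
      = (((j : ℂ) - (i : ℂ)) / 2) •
          cl m k ((tpow m k (i + j - 1) * uu m k ^ (2 * l)) • Dd m k (tpow m k 1)) := by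
  obtain ⟨t, ht⟩ := exists_unit_tpow_eq_zpow m k
  have h2 := (Dd m k).two_smul_mk_smul (R := ℂ) (tpow m k i * uu m k ^ l) (tpow m k j * uu m k ^ l)
  simp only [Derivation.mul_smul_map_mul_sub, ht, Derivation.zpow_smul_map_zpow_sub] at h2
  simp only [ht, zpow_one, cl]
  have hY : (uu m k ^ l) ^ 2 • ((j - i) • (↑(t ^ (i + j - 1)) : SER m k) • Dd m k ↑t)
      = ((j : ℂ) - i) • ((↑(t ^ (i + j - 1)) * uu m k ^ (2 * l)) • Dd m k ↑t) := by
    rw [← Int.cast_smul_eq_zsmul ℂ, Int.cast_sub, ← pow_mul', smul_comm, smul_smul, mul_comm]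
  rw [div_eq_inv_mul, mul_smul ((2 : ℂ)⁻¹), ← Submodule.Quotient.mk_smul, ← hY]
  exact (eq_inv_smul_iff₀ two_ne_zero).mpr h2

theorem stmt11 (m : ℕ) (hm : 2 ≤ m) (k : Polynomial ℂ) (i j : ℤ)
    (l : ℕ) (hl1 : 1 ≤ l) (hl2 : 2 * l ≤ m - 1) :
    cl m k ((tpow m k i * uu m k ^ l) • Dd m k (tpow m k j * uu m k ^ l))
      = (((j : ℂ) - (i : ℂ)) / 2) •
          cl m k ((tpow m k (i + j - 1) * uu m k ^ (2 * l)) • Dd m k (tpow m k 1)) :=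
  stmt11_general m k i j l
end
end

section
/- Let a ∈ ℂ \ {0,1} and b = (a+1)/(a-1). Then the 4-point ring R_a = ℂ[s, s⁻¹, (s-1)⁻¹, (s-a)⁻¹] is isomorphic as a ℂ-algebra to S_b = ℂ[t,t⁻¹,u] with u² = t² - 2bt + 1, and b ≠ ±1. -/
noncomputable section

/-- The 4-point ring `ℂ[s, s⁻¹, (s-1)⁻¹, (s-a)⁻¹]`: the localization of `ℂ[s]`
at the multiplicative set generated by `s`, `s - 1`, `s - a`. -/
abbrev FourPt (a : ℂ) : Type :=
  Localization (Submonoid.closure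
    {Polynomial.X, Polynomial.X - 1, Polynomial.X - Polynomial.C a} :
      Submonoid (Polynomial ℂ))

/-!
On `R_a` put `t = (1 - a) s / ((s - 1)(s - a))` and `u = (s² - a) / ((s - 1)(s - a))`; then
`u² = t² - 2bt + 1`. On `S_b` put `s = ((a + 1) t - (a - 1)(u + 1)) / 2t`; then
`t (s - 1)(s - a) = (1 - a) s` and `s (1 - a + (a + 1) t - t s) = a t`, so `s`, `s - 1`, `s - a`
are units. In both rings the same three relations
`t (s - 1)(s - a) = (1 - a) s`, `u (s - 1)(s - a) = s² - a`, `2ts = (a + 1) t - (a - 1)(u + 1)`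
hold, and each of them determines one coordinate from the others by cancelling a unit, so the
two induced `ℂ`-algebra maps are mutually inverse. Finally `b = ±1` would force `2 = 0` or
`a = 0`.
-/
namespace LaurentPolynomial

variable {R A : Type*} [CommSemiring R] [CommSemiring A] [Algebra R A]

def aevalUnit (x : Aˣ) : R[T;T⁻¹] →ₐ[R] A :=
  { eval₂ (algebraMap R A) x with commutes' := eval₂_C _ _ }

@[simp]
lemma aevalUnit_T_one (x : Aˣ) : aevalUnit x (T 1 : R[T;T⁻¹]) = x := by
  change eval₂ (algebraMap R A) x (T 1) = x
  simp

lemma algHom_toLaurent (f : R[T;T⁻¹] →ₐ[R] A) (p : Polynomial R) :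
    f (Polynomial.toLaurent p) = Polynomial.aeval (f (T 1)) p := by
  have h : f.comp Polynomial.toLaurentAlg = Polynomial.aeval (f (T 1)) :=
    Polynomial.algHom_ext (by simp)
  exact congr($h p)

lemma algHom_ext_T_one {f g : R[T;T⁻¹] →ₐ[R] A} (h : f (T 1) = g (T 1)) : f = g := by
  have hpoly (p : Polynomial R) : f (Polynomial.toLaurent p) = g (Polynomial.toLaurent p) := by
    rw [algHom_toLaurent, algHom_toLaurent, h]
  have hneg (n : ℕ) : f (T (-n)) = g (T (-n)) := by
    have hT : (T (-n) : R[T;T⁻¹]) * T n = 1 := by rw [← T_add, neg_add_cancel, T_zero]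
    have hpos : f (T n) = g (T n) := by rw [← Polynomial.toLaurent_X_pow]; exact hpoly _
    calc f (T (-n)) = f (T (-n)) * (g (T (-n)) * g (T n)) := by
          rw [← map_mul g, hT, map_one, mul_one]
      _ = f (T (-n)) * f (T n) * g (T (-n)) := by rw [hpos]; ring
      _ = g (T (-n)) := by rw [← map_mul, hT, map_one, one_mul]
  refine AlgHom.ext fun q => ?_
  induction q using induction_on_mul_T with
  | _ p n => rw [map_mul, map_mul, hpoly, hneg]

end LaurentPolynomial

open Polynomial

namespace CoordChange

variable {R : Type*} [CommRing R] {a b s t u : R}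

theorem t_mul (h2t : IsUnit (2 * t)) (hb : b * (a - 1) = a + 1) (hu : u ^ 2 = t ^ 2 - 2 * b * t + 1)
    (hs : 2 * t * s = (a + 1) * t - (a - 1) * (u + 1)) : t * ((s - 1) * (s - a)) = (1 - a) * s := by
  refine (h2t.pow 2).mul_left_cancel ?_
  linear_combination t * (2 * t * s - 2 * a * t + (a + 1) * t - (a - 1) * (u + 1) - 2 * t) * hs +
    t * (a - 1) ^ 2 * hu - 2 * (a - 1) * t ^ 2 * hb + 2 * (a - 1) * t * hs

theorem u_mul (h2t : IsUnit (2 * t)) (hb : b * (a - 1) = a + 1) (hu : u ^ 2 = t ^ 2 - 2 * b * t + 1)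
    (hs : 2 * t * s = (a + 1) * t - (a - 1) * (u + 1)) : u * ((s - 1) * (s - a)) = s ^ 2 - a := by
  have hts : t * (s ^ 2 - a) = (1 - a) * s * u := by
    refine (h2t.pow 2).mul_left_cancel ?_
    linear_combination t * (2 * t * s + (a + 1) * t - (a - 1) * (u + 1)) * hs -
      2 * t * (1 - a) * u * hs - t * (1 - a) ^ 2 * hu + 2 * t ^ 2 * (a - 1) * hb
  refine (isUnit_of_mul_isUnit_right h2t).mul_left_cancel ?_
  linear_combination u * t_mul h2t hb hu hs - hts

theorem u_sq (hP : IsUnit ((s - 1) * (s - a))) (hb : b * (a - 1) = a + 1)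
    (ht : t * ((s - 1) * (s - a)) = (1 - a) * s) (hu : u * ((s - 1) * (s - a)) = s ^ 2 - a) :
    u ^ 2 = t ^ 2 - 2 * b * t + 1 := by
  refine (hP.pow 2).mul_left_cancel ?_
  linear_combination (u * ((s - 1) * (s - a)) + s ^ 2 - a) * hu -
    (t * ((s - 1) * (s - a)) + (1 - a) * s) * ht + 2 * b * ((s - 1) * (s - a)) * ht -
    2 * s * ((s - 1) * (s - a)) * hb

theorem two_mul_t_mul_s (hP : IsUnit ((s - 1) * (s - a)))
    (ht : t * ((s - 1) * (s - a)) = (1 - a) * s) (hu : u * ((s - 1) * (s - a)) = s ^ 2 - a) :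
    2 * t * s = (a + 1) * t - (a - 1) * (u + 1) := by
  refine hP.mul_left_cancel ?_
  linear_combination 2 * s * ht - (a + 1) * ht + (a - 1) * hu

theorem isUnit_s (ha : IsUnit a) (ht : IsUnit t) (h : t * ((s - 1) * (s - a)) = (1 - a) * s) :
    IsUnit s :=
  isUnit_of_mul_isUnit_left (y := 1 - a - t * s + t * (a + 1)) <| by
    convert ht.mul ha using 1
    linear_combination -h

end CoordChange

namespace FourPt

variable {a : ℂ} {A : Type*} [CommRing A] [Algebra ℂ A]

def coord (a : ℂ) : FourPt a := algebraMap ℂ[X] (FourPt a) X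

theorem isUnit_algebraMap {p : ℂ[X]} (hp : p ∈ ({X, X - 1, X - C a} : Set ℂ[X])) :
    IsUnit (algebraMap ℂ[X] (FourPt a) p) :=
  IsLocalization.map_units (FourPt a) (⟨p, Submonoid.subset_closure hp⟩ : Submonoid.closure _)

theorem isUnit_coord : IsUnit (coord a) := isUnit_algebraMap (by simp)

theorem isUnit_coord_sub_one : IsUnit (coord a - 1) := by
  have h := isUnit_algebraMap (a := a) (p := X - 1) (by simp)
  rwa [map_sub, map_one] at h

theorem isUnit_coord_sub : IsUnit (coord a - algebraMap ℂ (FourPt a) a) := by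
  have h := isUnit_algebraMap (a := a) (p := X - C a) (by simp)
  have hC : algebraMap ℂ[X] (FourPt a) (C a) = algebraMap ℂ (FourPt a) a := by
    rw [IsScalarTower.algebraMap_apply ℂ ℂ[X] (FourPt a), Polynomial.algebraMap_eq]
  rwa [map_sub, hC] at h

def lift (s : A) (h0 : IsUnit s) (h1 : IsUnit (s - 1)) (ha : IsUnit (s - algebraMap ℂ A a)) :
    FourPt a →ₐ[ℂ] A :=
  IsLocalization.liftAlgHom (M := Submonoid.closure {X, X - 1, X - C a}) (f := aeval s) fun y => by
    have hM : Submonoid.closure {X, X - 1, X - C a} ≤ (IsUnit.submonoid A).comap (aeval s) :=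
      Submonoid.closure_le.2 (by simp [Set.insert_subset_iff, IsUnit.mem_submonoid_iff, h0, h1, ha])
    exact (IsUnit.mem_submonoid_iff _).1 (Submonoid.mem_comap.1 (hM y.2))

theorem lift_coord (s : A) (h0 : IsUnit s) (h1 : IsUnit (s - 1))
    (ha : IsUnit (s - algebraMap ℂ A a)) : lift s h0 h1 ha (coord a) = s := by
  rw [lift, coord, IsLocalization.liftAlgHom_apply, IsLocalization.lift_eq]
  exact aeval_X s

theorem algHom_ext {f g : FourPt a →ₐ[ℂ] A} (h : f (coord a) = g (coord a)) : f = g :=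
  Localization.algHom_ext _ (Polynomial.algHom_ext h)

end FourPt

namespace SER

variable {m : ℕ} {k : ℂ[X]} {A : Type*} [CommRing A] [Algebra ℂ A]

theorem isUnit_tpow (i : ℤ) : IsUnit (tpow m k i) := (LaurentPolynomial.isUnit_T i).map _

theorem uu_pow : uu m k ^ m = aeval (tpow m k 1) k := by
  have h := AdjoinRoot.mk_self (f := (X : LA[X]) ^ m - C k.toLaurent)
  rw [map_sub, map_pow, AdjoinRoot.mk_X, AdjoinRoot.mk_C, sub_eq_zero] at h
  rw [uu, h, tpow]
  exact LaurentPolynomial.algHom_toLaurent (IsScalarTower.toAlgHom ℂ LA (SER m k)) k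

def lift (t : Aˣ) (u : A) (h : u ^ m = aeval (t : A) k) : SER m k →ₐ[ℂ] A :=
  AdjoinRoot.liftAlgHom _ (LaurentPolynomial.aevalUnit t) u <| by
    simp [LaurentPolynomial.algHom_toLaurent, h]

theorem lift_tpow_one (t : Aˣ) (u : A) (h : u ^ m = aeval (t : A) k) :
    lift t u h (tpow m k 1) = t := by
  simp [lift, tpow]

theorem lift_uu (t : Aˣ) (u : A) (h : u ^ m = aeval (t : A) k) : lift t u h (uu m k) = u := by
  simp [lift, uu]

theorem algHom_ext {f g : SER m k →ₐ[ℂ] A} (ht : f (tpow m k 1) = g (tpow m k 1))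
    (hu : f (uu m k) = g (uu m k)) : f = g :=
  AdjoinRoot.algHom_ext' (LaurentPolynomial.algHom_ext_T_one ht) hu

end SER

theorem isUnit_two_of_algebra (K A : Type*) [Field K] [CharZero K] [Semiring A] [Algebra K A] :
    IsUnit (2 : A) := by
  simpa only [map_ofNat] using (Ne.isUnit (two_ne_zero : (2 : K) ≠ 0)).map (algebraMap K A)

section Isomorphism

variable {a b : ℂ} {A : Type*} [CommRing A] [Algebra ℂ A]

abbrev quadK (b : ℂ) : ℂ[X] := X ^ 2 - C (2 * b) * X + 1

theorem algebraMap_mul_sub_one (hb : b * (a - 1) = a + 1) :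
    algebraMap ℂ A b * (algebraMap ℂ A a - 1) = algebraMap ℂ A a + 1 := by
  simpa using congr(algebraMap ℂ A $hb)

theorem isUnit_one_sub_algebraMap (ha1 : a ≠ 1) : IsUnit (1 - algebraMap ℂ A a) := by
  simpa using (Ne.isUnit (sub_ne_zero.2 (Ne.symm ha1))).map (algebraMap ℂ A)

namespace SER

theorem uu_sq (b : ℂ) :
    uu 2 (quadK b) ^ 2 =
      tpow 2 (quadK b) 1 ^ 2 - 2 * algebraMap ℂ _ b * tpow 2 (quadK b) 1 + 1 := by
  simp [uu_pow, map_ofNat]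

theorem isUnit_two_mul_tpow (b : ℂ) : IsUnit (2 * tpow 2 (quadK b) 1) :=
  (isUnit_two_of_algebra ℂ _).mul (isUnit_tpow 1)

variable (a b) in
def coordS : SER 2 (quadK b) :=
  (↑(isUnit_two_mul_tpow b).unit⁻¹ : SER 2 (quadK b)) *
    ((algebraMap ℂ _ a + 1) * tpow 2 _ 1 - (algebraMap ℂ _ a - 1) * (uu 2 _ + 1))

theorem two_mul_tpow_mul_coordS :
    2 * tpow 2 (quadK b) 1 * coordS a b =
      (algebraMap ℂ _ a + 1) * tpow 2 _ 1 - (algebraMap ℂ _ a - 1) * (uu 2 _ + 1) := by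
  rw [coordS, ← mul_assoc, IsUnit.mul_val_inv, one_mul]

theorem tpow_mul_coordS (hb : b * (a - 1) = a + 1) :
    tpow 2 (quadK b) 1 * ((coordS a b - 1) * (coordS a b - algebraMap ℂ _ a)) =
      (1 - algebraMap ℂ _ a) * coordS a b :=
  CoordChange.t_mul (isUnit_two_mul_tpow b) (algebraMap_mul_sub_one hb) (uu_sq b)
    two_mul_tpow_mul_coordS

theorem uu_mul_coordS (hb : b * (a - 1) = a + 1) :
    uu 2 (quadK b) * ((coordS a b - 1) * (coordS a b - algebraMap ℂ _ a)) =
      coordS a b ^ 2 - algebraMap ℂ _ a :=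
  CoordChange.u_mul (isUnit_two_mul_tpow b) (algebraMap_mul_sub_one hb) (uu_sq b)
    two_mul_tpow_mul_coordS

theorem isUnit_coordS (ha0 : a ≠ 0) (hb : b * (a - 1) = a + 1) : IsUnit (coordS a b) :=
  CoordChange.isUnit_s ((Ne.isUnit ha0).map _) (isUnit_tpow 1) (tpow_mul_coordS hb)

theorem isUnit_coordS_sub_one_mul_sub (ha0 : a ≠ 0) (ha1 : a ≠ 1) (hb : b * (a - 1) = a + 1) :
    IsUnit ((coordS a b - 1) * (coordS a b - algebraMap ℂ _ a)) :=
  isUnit_of_mul_isUnit_right <| (tpow_mul_coordS hb).symm ▸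
    (isUnit_one_sub_algebraMap ha1).mul (isUnit_coordS ha0 hb)

end SER

namespace FourPt

theorem isUnit_coord_sub_one_mul_sub :
    IsUnit ((coord a - 1) * (coord a - algebraMap ℂ (FourPt a) a)) :=
  isUnit_coord_sub_one.mul isUnit_coord_sub

variable (a) in
def coordT : FourPt a :=
  (1 - algebraMap ℂ _ a) * coord a * ↑(isUnit_coord_sub_one_mul_sub (a := a)).unit⁻¹

variable (a) in
def coordU : FourPt a :=
  (coord a ^ 2 - algebraMap ℂ _ a) * ↑(isUnit_coord_sub_one_mul_sub (a := a)).unit⁻¹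

theorem coordT_mul :
    coordT a * ((coord a - 1) * (coord a - algebraMap ℂ _ a)) =
      (1 - algebraMap ℂ _ a) * coord a := by
  rw [coordT, mul_assoc, IsUnit.val_inv_mul, mul_one]

theorem coordU_mul :
    coordU a * ((coord a - 1) * (coord a - algebraMap ℂ _ a)) =
      coord a ^ 2 - algebraMap ℂ _ a := by
  rw [coordU, mul_assoc, IsUnit.val_inv_mul, mul_one]

theorem isUnit_coordT (ha1 : a ≠ 1) : IsUnit (coordT a) := by
  unfold coordT
  exact ((isUnit_one_sub_algebraMap ha1).mul isUnit_coord).mul (Units.isUnit _)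

theorem coordU_sq (hb : b * (a - 1) = a + 1) :
    coordU a ^ 2 = coordT a ^ 2 - 2 * algebraMap ℂ _ b * coordT a + 1 :=
  CoordChange.u_sq isUnit_coord_sub_one_mul_sub (algebraMap_mul_sub_one hb) coordT_mul coordU_mul

theorem two_mul_coordT_mul_coord :
    2 * coordT a * coord a =
      (algebraMap ℂ _ a + 1) * coordT a - (algebraMap ℂ _ a - 1) * (coordU a + 1) :=
  CoordChange.two_mul_t_mul_s isUnit_coord_sub_one_mul_sub coordT_mul coordU_mul

end FourPt

open FourPt SER

def toSER (ha0 : a ≠ 0) (ha1 : a ≠ 1) (hb : b * (a - 1) = a + 1) :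
    FourPt a →ₐ[ℂ] SER 2 (quadK b) :=
  FourPt.lift (coordS a b) (isUnit_coordS ha0 hb)
    (isUnit_of_mul_isUnit_left (isUnit_coordS_sub_one_mul_sub ha0 ha1 hb))
    (isUnit_of_mul_isUnit_right (isUnit_coordS_sub_one_mul_sub ha0 ha1 hb))

def ofSER (ha1 : a ≠ 1) (hb : b * (a - 1) = a + 1) : SER 2 (quadK b) →ₐ[ℂ] FourPt a :=
  SER.lift (isUnit_coordT ha1).unit (coordU a) (by simpa [map_ofNat] using coordU_sq hb)

theorem toSER_coord (ha0 : a ≠ 0) (ha1 : a ≠ 1) (hb : b * (a - 1) = a + 1) :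
    toSER ha0 ha1 hb (coord a) = coordS a b :=
  lift_coord ..

theorem ofSER_tpow_one (ha1 : a ≠ 1) (hb : b * (a - 1) = a + 1) :
    ofSER ha1 hb (tpow 2 (quadK b) 1) = coordT a :=
  lift_tpow_one ..

theorem ofSER_uu (ha1 : a ≠ 1) (hb : b * (a - 1) = a + 1) :
    ofSER ha1 hb (uu 2 (quadK b)) = coordU a :=
  lift_uu ..

theorem toSER_comp_ofSER (ha0 : a ≠ 0) (ha1 : a ≠ 1) (hb : b * (a - 1) = a + 1) :
    (toSER ha0 ha1 hb).comp (ofSER ha1 hb) = AlgHom.id ℂ _ := by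
  have hP := isUnit_coordS_sub_one_mul_sub ha0 ha1 hb
  refine SER.algHom_ext (hP.mul_right_cancel ?_) (hP.mul_right_cancel ?_)
  · rw [AlgHom.id_apply, tpow_mul_coordS hb, AlgHom.comp_apply, ofSER_tpow_one,
      ← toSER_coord ha0 ha1 hb]
    simp only [← map_one (toSER ha0 ha1 hb), ← AlgHom.commutes (toSER ha0 ha1 hb), ← map_sub,
      ← map_mul, coordT_mul]
  · rw [AlgHom.id_apply, uu_mul_coordS hb, AlgHom.comp_apply, ofSER_uu,
      ← toSER_coord ha0 ha1 hb]
    simp only [← map_one (toSER ha0 ha1 hb), ← AlgHom.commutes (toSER ha0 ha1 hb), ← map_sub,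
      ← map_mul, ← map_pow, coordU_mul]

theorem ofSER_comp_toSER (ha0 : a ≠ 0) (ha1 : a ≠ 1) (hb : b * (a - 1) = a + 1) :
    (ofSER ha1 hb).comp (toSER ha0 ha1 hb) = AlgHom.id ℂ _ := by
  have h2t := (isUnit_two_of_algebra ℂ (FourPt a)).mul (isUnit_coordT ha1)
  refine FourPt.algHom_ext (h2t.mul_left_cancel ?_)
  have hs := congr(ofSER ha1 hb $(two_mul_tpow_mul_coordS (a := a) (b := b)))
  simp only [map_mul, map_sub, map_add, map_one, map_ofNat, AlgHom.commutes, ofSER_tpow_one,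
    ofSER_uu] at hs
  rw [AlgHom.comp_apply, toSER_coord, AlgHom.id_apply, hs, two_mul_coordT_mul_coord]

def fourPtEquivSER (ha0 : a ≠ 0) (ha1 : a ≠ 1) (hb : b * (a - 1) = a + 1) :
    FourPt a ≃ₐ[ℂ] SER 2 (quadK b) :=
  AlgEquiv.ofAlgHom (toSER ha0 ha1 hb) (ofSER ha1 hb) (toSER_comp_ofSER ha0 ha1 hb)
    (ofSER_comp_toSER ha0 ha1 hb)

end Isomorphism

theorem stmt18 (a : ℂ) (ha0 : a ≠ 0) (ha1 : a ≠ 1) (b : ℂ) (hb : b = (a + 1) / (a - 1)) :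
    Nonempty (FourPt a ≃ₐ[ℂ]
        SER 2 (Polynomial.X ^ 2 - Polynomial.C (2 * b) * Polynomial.X + 1))
      ∧ b ≠ 1 ∧ b ≠ -1 := by
  have hb' : b * (a - 1) = a + 1 := by rw [hb, div_mul_cancel₀ _ (sub_ne_zero.2 ha1)]
  refine ⟨⟨fourPtEquivSER ha0 ha1 hb'⟩, fun h => ?_, fun h => ?_⟩
  · rw [h] at hb'
    exact two_ne_zero (by linear_combination -hb' : (2 : ℂ) = 0)
  · rw [h] at hb'
    exact ha0 (by linear_combination -hb' / 2)
end
end
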